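/- Desnanot–Jacobi over a field: if A is an n × n matrix over a field (n ≥ 3) with det(A[2..n−1,2..n−1]) ≠ 0, then det(A) = (det(A[1..n−1,1..n−1])·det(A[2..n,2..n]) − det(A[1..n−1,2..n])·det(A[2..n,1..n−1])) / det(A[2..n−1,2..n−1]). -/
import Mathlib
set_option linter.unreachableTactic false
set_option linter.unusedTactic false

/-- Embedding of `Fin (n-1)` into `Fin n` keeping the low indices `0,…,n-2`. -/
def lo {n : ℕ} (i : Fin (n - 1)) : Fin n := ⟨i, by have := i.isLt; omega⟩

/-- Embedding of `Fin (n-1)` into `Fin n` keeping the high indices `1,…,n-1`. -/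
def hi {n : ℕ} (i : Fin (n - 1)) : Fin n := ⟨i + 1, by have := i.isLt; omega⟩

/-- Embedding of `Fin (n-2)` into `Fin n` keeping the middle indices `1,…,n-2`. -/
def mid {n : ℕ} (i : Fin (n - 2)) : Fin n := ⟨i + 1, by have := i.isLt; omega⟩

/-- The two corner indices `0` and `n-1`. -/
def cnr (n : ℕ) (hn : 3 ≤ n) : Fin 2 → Fin n :=
  ![⟨0, by omega⟩, ⟨n - 1, by omega⟩]

def eqv (n : ℕ) (hn : 3 ≤ n) : Fin 2 ⊕ Fin (n - 2) ≃ Fin n where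
  toFun := Sum.elim (cnr n hn) mid
  invFun k := if _ : (k : ℕ) = 0 then Sum.inl 0 else if _ : (k : ℕ) = n - 1 then Sum.inl 1
    else Sum.inr ⟨(k : ℕ) - 1, by have := k.isLt; omega⟩
  left_inv := by
    rintro (i | j)
    · fin_cases i
      · simp [cnr]
      · have h1 : n - 1 ≠ 0 := by omega
        simp [cnr, h1]
    · have h1 : (j : ℕ) + 1 ≠ 0 := by omega
      have h2 : (j : ℕ) + 1 ≠ n - 1 := by have := j.isLt; omega
      simp [mid, h1, h2]
  right_inv := by
    intro k
    dsimp only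
    split_ifs with h0 h1
    · simp [cnr]; exact Fin.ext h0.symm
    · simp [cnr]; exact Fin.ext h1.symm
    · have := k.isLt
      simp only [Sum.elim_inr]
      exact Fin.ext (by simp [mid]; omega)

def eqf (n : ℕ) (hn : 3 ≤ n) : Fin 1 ⊕ Fin (n - 2) ≃ Fin (n - 1) where
  toFun := Sum.elim (fun _ => ⟨0, by omega⟩) (fun j => ⟨(j : ℕ) + 1, by have := j.isLt; omega⟩)
  invFun k := if _ : (k : ℕ) = 0 then Sum.inl 0
    else Sum.inr ⟨(k : ℕ) - 1, by have := k.isLt; omega⟩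
  left_inv := by
    rintro (i | j)
    · simp; exact Subsingleton.elim _ _
    · have h1 : (j : ℕ) + 1 ≠ 0 := by omega
      simp [h1]
  right_inv := by
    intro k
    dsimp only
    split_ifs with h0
    · simp; exact Fin.ext h0.symm
    · simp only [Sum.elim_inr]
      exact Fin.ext (by simp; have := k.isLt; omega)

def eqg (n : ℕ) (hn : 3 ≤ n) : Fin 1 ⊕ Fin (n - 2) ≃ Fin (n - 1) where
  toFun := Sum.elim (fun _ => ⟨n - 2, by omega⟩) (fun j => ⟨(j : ℕ), by have := j.isLt; omega⟩)
  invFun k := if _ : (k : ℕ) = n - 2 then Sum.inl 0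
    else Sum.inr ⟨(k : ℕ), by have := k.isLt; omega⟩
  left_inv := by
    rintro (i | j)
    · simp; exact Subsingleton.elim _ _
    · have h1 : (j : ℕ) ≠ n - 2 := by have := j.isLt; omega
      simp [h1]
  right_inv := by
    intro k
    dsimp only
    split_ifs with h0
    · simp; exact Fin.ext h0.symm
    · simp

/-- determinant of a block matrix with 1×1 upper-left block. -/
lemma det_fromBlocks_fin_one {K : Type*} [Field K] {k : Type*} [Fintype k] [DecidableEq k]
    (a : K) (q : Matrix (Fin 1) k K) (r : Matrix k (Fin 1) K) (T : Matrix k k K) [Invertible T] :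
    (Matrix.fromBlocks (Matrix.of fun _ _ => a) q r T).det
      = T.det * (a - (q * ⅟T * r) 0 0) := by
  rw [Matrix.det_fromBlocks₂₂, Matrix.det_fin_one]
  simp [Matrix.sub_apply]

theorem desnanot_jacobi {K : Type*} [Field K] {n : ℕ} (hn : 3 ≤ n)
    (A : Matrix (Fin n) (Fin n) K) (h : (A.submatrix mid mid).det ≠ 0) :
    A.det =
      ((A.submatrix lo lo).det * (A.submatrix hi hi).det -
        (A.submatrix lo hi).det * (A.submatrix hi lo).det) /
          (A.submatrix mid mid).det := by
  classical
  haveI : Invertible (A.submatrix mid mid) :=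
    (A.submatrix mid mid).invertibleOfIsUnitDet (isUnit_iff_ne_zero.mpr h)
  set S : Matrix (Fin (n-2)) (Fin (n-2)) K := A.submatrix mid mid with hS
  set X : Matrix (Fin 2) (Fin 2) K :=
    A.submatrix (cnr n hn) (cnr n hn) -
      A.submatrix (cnr n hn) mid * ⅟S * A.submatrix mid (cnr n hn) with hX
  -- the product entries agree
  have key : ∀ x y : Fin 2,
      (A.submatrix (fun _ : Fin 1 => cnr n hn x) mid * ⅟S *
        A.submatrix mid (fun _ : Fin 1 => cnr n hn y)) 0 0
      = (A.submatrix (cnr n hn) mid * ⅟S * A.submatrix mid (cnr n hn)) x y := by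
    intro x y
    simp [Matrix.mul_apply]
  -- (1) det A = det S * det X
  have h1 : A.det = S.det * X.det := by
    have hb : A.submatrix (eqv n hn) (eqv n hn) =
        Matrix.fromBlocks (A.submatrix (cnr n hn) (cnr n hn)) (A.submatrix (cnr n hn) mid)
          (A.submatrix mid (cnr n hn)) S := by
      ext (i | i) (j | j) <;> rfl
    rw [← Matrix.det_submatrix_equiv_self (eqv n hn) A, hb, Matrix.det_fromBlocks₂₂, hX]
  -- (2) det (A lo lo) = det S * X 0 0
  have h2 : (A.submatrix lo lo).det = S.det * X 0 0 := by
    have hb : (A.submatrix lo lo).submatrix (eqf n hn) (eqf n hn) =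
        Matrix.fromBlocks (Matrix.of fun _ _ => A (cnr n hn 0) (cnr n hn 0))
          (A.submatrix (fun _ : Fin 1 => cnr n hn 0) mid)
          (A.submatrix mid (fun _ : Fin 1 => cnr n hn 0)) S := by
      ext (i | i) (j | j) <;>
        simp only [Matrix.submatrix_apply, Equiv.coe_fn_mk, Sum.elim_inl, Sum.elim_inr,
          Matrix.fromBlocks_apply₁₁, Matrix.fromBlocks_apply₁₂, Matrix.fromBlocks_apply₂₁,
          Matrix.fromBlocks_apply₂₂, Matrix.of_apply, eqf, hS] <;>
        (congr 1 <;> exact Fin.ext (by simp [lo, mid, cnr]))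
    rw [← Matrix.det_submatrix_equiv_self (eqf n hn), hb, det_fromBlocks_fin_one, key,
      hX]
    simp [Matrix.sub_apply]
  -- (3) det (A hi hi) = det S * X 1 1
  have h3 : (A.submatrix hi hi).det = S.det * X 1 1 := by
    have hb : (A.submatrix hi hi).submatrix (eqg n hn) (eqg n hn) =
        Matrix.fromBlocks (Matrix.of fun _ _ => A (cnr n hn 1) (cnr n hn 1))
          (A.submatrix (fun _ : Fin 1 => cnr n hn 1) mid)
          (A.submatrix mid (fun _ : Fin 1 => cnr n hn 1)) S := by
      ext (i | i) (j | j) <;>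
        simp only [Matrix.submatrix_apply, Equiv.coe_fn_mk, Sum.elim_inl, Sum.elim_inr,
          Matrix.fromBlocks_apply₁₁, Matrix.fromBlocks_apply₁₂, Matrix.fromBlocks_apply₂₁,
          Matrix.fromBlocks_apply₂₂, Matrix.of_apply, eqg, hS] <;>
        (congr 1 <;> exact Fin.ext (by simp [hi, mid, cnr]; omega))
    rw [← Matrix.det_submatrix_equiv_self (eqg n hn), hb, det_fromBlocks_fin_one, key,
      hX]
    simp [Matrix.sub_apply]
  -- the sign
  set σ : Equiv.Perm (Fin 1 ⊕ Fin (n - 2)) := (eqg n hn).trans (eqf n hn).symm with hσ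
  set ε : K := ((Equiv.Perm.sign σ : ℤ) : K) with hε'
  have hε : ε * ε = 1 := by
    rcases Int.units_eq_one_or (Equiv.Perm.sign σ) with hs | hs <;>
      simp [hε', hs]
  -- (4) ε * det (A lo hi) = det S * X 0 1
  have h4 : ε * (A.submatrix lo hi).det = S.det * X 0 1 := by
    have hcol : (A.submatrix lo hi).submatrix (eqf n hn) (eqg n hn) =
        ((A.submatrix lo hi).submatrix (eqf n hn) (eqf n hn)).submatrix id σ := by
      ext i j
      simp [hσ, Matrix.submatrix_apply]
    have hb : (A.submatrix lo hi).submatrix (eqf n hn) (eqg n hn) =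
        Matrix.fromBlocks (Matrix.of fun _ _ => A (cnr n hn 0) (cnr n hn 1))
          (A.submatrix (fun _ : Fin 1 => cnr n hn 0) mid)
          (A.submatrix mid (fun _ : Fin 1 => cnr n hn 1)) S := by
      ext (i | i) (j | j) <;>
        simp only [Matrix.submatrix_apply, Equiv.coe_fn_mk, Sum.elim_inl, Sum.elim_inr,
          Matrix.fromBlocks_apply₁₁, Matrix.fromBlocks_apply₁₂, Matrix.fromBlocks_apply₂₁,
          Matrix.fromBlocks_apply₂₂, Matrix.of_apply, eqf, eqg, hS] <;>
        (congr 1 <;> exact Fin.ext (by simp [lo, hi, mid, cnr]; omega))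
    have := hcol.symm.trans hb
    have hdet : (Equiv.Perm.sign σ : ℤ) •
        ((A.submatrix lo hi).submatrix (eqf n hn) (eqf n hn)).det
        = S.det * (A (cnr n hn 0) (cnr n hn 1) -
            (A.submatrix (cnr n hn) mid * ⅟S * A.submatrix mid (cnr n hn)) 0 1) := by
      rw [← key 0 1, ← det_fromBlocks_fin_one, ← hb, hcol, Matrix.det_permute']
      simp [zsmul_eq_mul]
    rw [Matrix.det_submatrix_equiv_self (eqf n hn)] at hdet
    rw [hX]
    simpa [hε', zsmul_eq_mul, Matrix.sub_apply] using hdet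
  -- (5) ε * det (A hi lo) = det S * X 1 0
  have h5 : ε * (A.submatrix hi lo).det = S.det * X 1 0 := by
    have hcol : (A.submatrix hi lo).submatrix (eqg n hn) (eqf n hn) =
        ((A.submatrix hi lo).submatrix (eqf n hn) (eqf n hn)).submatrix σ id := by
      ext i j
      simp [hσ, Matrix.submatrix_apply]
    have hb : (A.submatrix hi lo).submatrix (eqg n hn) (eqf n hn) =
        Matrix.fromBlocks (Matrix.of fun _ _ => A (cnr n hn 1) (cnr n hn 0))
          (A.submatrix (fun _ : Fin 1 => cnr n hn 1) mid)
          (A.submatrix mid (fun _ : Fin 1 => cnr n hn 0)) S := by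
      ext (i | i) (j | j) <;>
        simp only [Matrix.submatrix_apply, Equiv.coe_fn_mk, Sum.elim_inl, Sum.elim_inr,
          Matrix.fromBlocks_apply₁₁, Matrix.fromBlocks_apply₁₂, Matrix.fromBlocks_apply₂₁,
          Matrix.fromBlocks_apply₂₂, Matrix.of_apply, eqf, eqg, hS] <;>
        (congr 1 <;> exact Fin.ext (by simp [lo, hi, mid, cnr]; omega))
    have hdet : (Equiv.Perm.sign σ : ℤ) •
        ((A.submatrix hi lo).submatrix (eqf n hn) (eqf n hn)).det
        = S.det * (A (cnr n hn 1) (cnr n hn 0) -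
            (A.submatrix (cnr n hn) mid * ⅟S * A.submatrix mid (cnr n hn)) 1 0) := by
      rw [← key 1 0, ← det_fromBlocks_fin_one, ← hb, hcol, Matrix.det_permute]
      simp [zsmul_eq_mul]
    rw [Matrix.det_submatrix_equiv_self (eqf n hn)] at hdet
    rw [hX]
    simpa [hε', zsmul_eq_mul, Matrix.sub_apply] using hdet
  -- conclude
  have hpq : (A.submatrix lo hi).det * (A.submatrix hi lo).det
      = (S.det * X 0 1) * (S.det * X 1 0) := by
    calc (A.submatrix lo hi).det * (A.submatrix hi lo).det
        = (ε * (A.submatrix lo hi).det) * (ε * (A.submatrix hi lo).det) := by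
          rw [show (ε * (A.submatrix lo hi).det) * (ε * (A.submatrix hi lo).det)
            = (ε * ε) * ((A.submatrix lo hi).det * (A.submatrix hi lo).det) by ring, hε, one_mul]
      _ = _ := by rw [h4, h5]
  rw [eq_div_iff h]
  rw [h2, h3, hpq, h1, Matrix.det_fin_two]
  ring
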